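/- Let x < y be real numbers, let f : [x,y] → ℝ be continuous and convex, and let F : [x,y] → ℝ be an antiderivative of f. Then ((1/3)F(x) − (8/3)F((3x+y)/4) + (8/3)F((x+3y)/4) − (1/3)F(y))/(y−x) ≤ (1/(y−x)) ∫ₓʸ f(t) dt. -/

import Mathlib

/-!
The numerator equals `(8/3) ∫_{m₁}^{m₂} f - (1/3) ∫_x^y f` with `m₁, m₂` the quarter points, so the
claim is `2 ∫_{m₁}^{m₂} f ≤ ∫_x^y f`: the middle half of the interval carries at most half of the
integral of a convex function. Indeed, the secant `ℓ` of `f` through `m₁` and `m₂` lies above `f` on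
`[m₁, m₂]` and below it outside, and an affine function has the same integral over the middle half
as over the two outer quarters.
-/

open Set MeasureTheory intervalIntegral

theorem integral_eq_sub_of_hasDerivWithinAt_Icc {f F : ℝ → ℝ} {a b : ℝ} (hab : a ≤ b)
    (hF : ∀ t ∈ Icc a b, HasDerivWithinAt F (f t) (Icc a b) t)
    (hf : IntervalIntegrable f volume a b) :
    ∫ t in a..b, f t = F b - F a :=
  integral_eq_sub_of_hasDerivAt_of_le hab (fun t ht ↦ (hF t ht).continuousWithinAt)
    (fun t ht ↦ (hF t (Ioo_subset_Icc_self ht)).hasDerivAt (Icc_mem_nhds ht.1 ht.2)) hf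

theorem integral_affine_middle_half (α β a b : ℝ) :
    ∫ t in (3 * a + b) / 4..(a + 3 * b) / 4, (α + β * t)
      = (∫ t in a..(3 * a + b) / 4, (α + β * t)) + ∫ t in (a + 3 * b) / 4..b, (α + β * t) := by
  have hint (u v : ℝ) : ∫ t in u..v, (α + β * t) = α * (v - u) + β * ((v ^ 2 - u ^ 2) / 2) := by
    rw [integral_add intervalIntegrable_const ((continuous_const_mul β).intervalIntegrable u v),
      intervalIntegral.integral_const, intervalIntegral.integral_const_mul, integral_id, smul_eq_mul]
    ring
  simp only [hint]
  ring

section Secant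

variable {s : Set ℝ} {f : ℝ → ℝ} {p q t : ℝ}

theorem ConvexOn.mul_le_secant (hf : ConvexOn ℝ s f) (hp : p ∈ s) (hq : q ∈ s)
    (ht : t ∈ Icc p q) : (q - p) * f t ≤ (q - t) * f p + (t - p) * f q := by
  rcases ht.1.eq_or_lt with rfl | hpt
  · linarith
  rcases ht.2.eq_or_lt with rfl | htq
  · linarith
  exact hf.secant_mono_aux1 hp hq hpt htq

theorem ConvexOn.secant_le_mul_of_le_left (hf : ConvexOn ℝ s f) (ht : t ∈ s) (hq : q ∈ s)
    (htp : t ≤ p) (hpq : p < q) : (q - t) * f p + (t - p) * f q ≤ (q - p) * f t := by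
  rcases htp.eq_or_lt with rfl | htp
  · linarith
  linarith [hf.secant_mono_aux1 ht hq htp hpq]

theorem ConvexOn.secant_le_mul_of_right_le (hf : ConvexOn ℝ s f) (hp : p ∈ s) (ht : t ∈ s)
    (hpq : p < q) (hqt : q ≤ t) : (q - t) * f p + (t - p) * f q ≤ (q - p) * f t := by
  rcases hqt.eq_or_lt with rfl | hqt
  · linarith
  linarith [hf.secant_mono_aux1 hp ht hpq hqt]

end Secant

theorem ConvexOn.two_mul_integral_middle_half_le {f : ℝ → ℝ} {a b : ℝ} (hab : a < b)
    (hf_cont : ContinuousOn f (Icc a b)) (hf : ConvexOn ℝ (Icc a b) f) :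
    2 * ∫ t in (3 * a + b) / 4..(a + 3 * b) / 4, f t ≤ ∫ t in a..b, f t := by
  set p := (3 * a + b) / 4 with hp_def
  set q := (a + 3 * b) / 4 with hq_def
  have hap : a ≤ p := by linarith
  have hpq : p < q := by linarith
  have hqb : q ≤ b := by linarith
  have hp : p ∈ Icc a b := ⟨hap, by linarith⟩
  have hq : q ∈ Icc a b := ⟨by linarith, hqb⟩
  have ha : a ∈ Icc a b := left_mem_Icc.2 hab.le
  have hb : b ∈ Icc a b := right_mem_Icc.2 hab.le
  have hf_int {u v : ℝ} (hu : u ∈ Icc a b) (hv : v ∈ Icc a b) : IntervalIntegrable f volume u v :=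
    (hf_cont.mono (uIcc_subset_Icc hu hv)).intervalIntegrable
  have hdf_int {u v : ℝ} (hu : u ∈ Icc a b) (hv : v ∈ Icc a b) :
      IntervalIntegrable (fun t ↦ (q - p) * f t) volume u v :=
    (hf_int hu hv).const_mul _
  let ℓ : ℝ → ℝ := fun t ↦ (q * f p - p * f q) + (f q - f p) * t
  have hℓ (t : ℝ) : ℓ t = (q - t) * f p + (t - p) * f q := by ring
  have hℓ_int (u v : ℝ) : IntervalIntegrable ℓ volume u v :=
    (by fun_prop : Continuous ℓ).intervalIntegrable u v
  have hmid : ∫ t in p..q, (q - p) * f t ≤ ∫ t in p..q, ℓ t :=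
    integral_mono_on hpq.le (hdf_int hp hq) (hℓ_int p q) fun t ht ↦
      (hℓ t).symm ▸ hf.mul_le_secant hp hq ht
  have hleft : ∫ t in a..p, ℓ t ≤ ∫ t in a..p, (q - p) * f t :=
    integral_mono_on hap (hℓ_int a p) (hdf_int ha hp) fun t ht ↦
      (hℓ t).symm ▸ hf.secant_le_mul_of_le_left ⟨ht.1, ht.2.trans hp.2⟩ hq ht.2 hpq
  have hright : ∫ t in q..b, ℓ t ≤ ∫ t in q..b, (q - p) * f t :=
    integral_mono_on hqb (hℓ_int q b) (hdf_int hq hb) fun t ht ↦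
      (hℓ t).symm ▸ hf.secant_le_mul_of_right_le hp ⟨hq.1.trans ht.1, ht.2⟩ hpq ht.1
  have hsplit : ∫ t in a..b, f t
      = (∫ t in a..p, f t) + (∫ t in p..q, f t) + ∫ t in q..b, f t := by
    rw [integral_add_adjacent_intervals (hf_int ha hp) (hf_int hp hq),
      integral_add_adjacent_intervals (hf_int ha hq) (hf_int hq hb)]
  have houter : ∫ t in p..q, f t ≤ (∫ t in a..p, f t) + ∫ t in q..b, f t := by
    simp only [intervalIntegral.integral_const_mul] at hmid hleft hright
    have haff : ∫ t in p..q, ℓ t = (∫ t in a..p, ℓ t) + ∫ t in q..b, ℓ t :=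
      integral_affine_middle_half _ _ a b
    refine le_of_mul_le_mul_left ?_ (sub_pos.2 hpq)
    rw [mul_add]
    linarith
  linarith

/-- Example 1: `((1/3)F(x) - (8/3)F((3x+y)/4) + (8/3)F((x+3y)/4) - (1/3)F(y))/(y-x)
≤ (1/(y-x)) ∫ₓʸ f` for every continuous convex `f` and its antiderivative `F`. -/
theorem stmt_14 (x y : ℝ) (hxy : x < y) (f F : ℝ → ℝ)
    (hf_cont : ContinuousOn f (Set.Icc x y)) (hf_conv : ConvexOn ℝ (Set.Icc x y) f)
    (hF : ∀ t ∈ Set.Icc x y, HasDerivWithinAt F (f t) (Set.Icc x y) t) :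
    ((1 / 3) * F x - (8 / 3) * F ((3 * x + y) / 4) + (8 / 3) * F ((x + 3 * y) / 4)
        - (1 / 3) * F y) / (y - x)
      ≤ (1 / (y - x)) * ∫ t in x..y, f t := by
  set m₁ := (3 * x + y) / 4 with hm₁
  set m₂ := (x + 3 * y) / 4 with hm₂
  have hm : Icc m₁ m₂ ⊆ Icc x y := Icc_subset_Icc (by linarith) (by linarith)
  have hI : ∫ t in x..y, f t = F y - F x :=
    integral_eq_sub_of_hasDerivWithinAt_Icc hxy.le hF (hf_cont.intervalIntegrable_of_Icc hxy.le)
  have hM : ∫ t in m₁..m₂, f t = F m₂ - F m₁ :=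
    integral_eq_sub_of_hasDerivWithinAt_Icc (by linarith) (fun t ht ↦ (hF t (hm ht)).mono hm)
      ((hf_cont.mono hm).intervalIntegrable_of_Icc (by linarith))
  have hhalf := hf_conv.two_mul_integral_middle_half_le hxy hf_cont
  rw [one_div_mul_eq_div (y - x)]
  exact div_le_div_of_nonneg_right (by linarith) (sub_nonneg.2 hxy.le)
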